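/- arXiv:1403.0938 — 2 statements merged into one kernel-verified Lean document; each statement's English description precedes it below -/
import Mathlib

section
/- Let M > 0 and B > 0 be fixed, and for a ∈ [0, M] set r₊(a) = M + √(M² − a²) and Φ(a) = π r₊(a)² B (1 − a⁴/r₊(a)⁴). Then the area-normalized flux a ↦ Φ(a)/(4π M r₊(a)) (the flux divided by the area 4πMr₊ of the northern hemisphere of the horizon) is continuous and strictly decreasing on [0, M], and it equals 0 at a = M. -/
open Real Set

/-- The area-normalized Wald flux `a ↦ Φ(a)/(4π M r₊(a))` (the flux divided by the area
`4πMr₊` of the northern hemisphere of the horizon) is continuous and strictly decreasing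
on `[0, M]`, and equals `0` at `a = M`. -/
theorem wald_normalized_flux_decreasing (M B : ℝ) (hM : 0 < M) (hB : 0 < B)
    (rp Φ : ℝ → ℝ)
    (hrp : ∀ a, rp a = M + Real.sqrt (M ^ 2 - a ^ 2))
    (hΦ : ∀ a, Φ a = π * (rp a) ^ 2 * B * (1 - a ^ 4 / (rp a) ^ 4)) :
    ContinuousOn (fun a => Φ a / (4 * π * M * rp a)) (Set.Icc 0 M) ∧
      StrictAntiOn (fun a => Φ a / (4 * π * M * rp a)) (Set.Icc 0 M) ∧
      Φ M / (4 * π * M * rp M) = 0 := by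
  have hrpos : ∀ a, 0 < rp a := by
    intro a
    rw [hrp a]
    have := Real.sqrt_nonneg (M ^ 2 - a ^ 2)
    linarith
  have hπ : (0:ℝ) < π := Real.pi_pos
  have key : ∀ a, Φ a / (4 * π * M * rp a)
      = B / (4 * M) * (rp a - a ^ 4 / (rp a) ^ 3) := by
    intro a
    have h := (hrpos a).ne'
    rw [hΦ a]
    field_simp
  have hrpM : rp M = M := by
    rw [hrp M]
    simp
  -- strict monotonicity of rp (decreasing) on [0,M]
  have hrp_anti : ∀ a ∈ Set.Icc (0:ℝ) M, ∀ b ∈ Set.Icc (0:ℝ) M, a < b → rp b < rp a := by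
    intro a ha b hb hab
    rw [hrp a, hrp b]
    have h1 : (0:ℝ) ≤ M ^ 2 - b ^ 2 := by nlinarith [hb.2, hb.1]
    have h2 : M ^ 2 - b ^ 2 < M ^ 2 - a ^ 2 := by nlinarith [ha.1]
    have := Real.sqrt_lt_sqrt h1 h2
    linarith
  refine ⟨?_, ?_, ?_⟩
  · -- continuity
    have hfun : (fun a => Φ a / (4 * π * M * rp a))
        = fun a => B / (4 * M) * (rp a - a ^ 4 / (rp a) ^ 3) := funext key
    rw [hfun]
    have hrp_cont : Continuous rp := by
      have : rp = fun a => M + Real.sqrt (M ^ 2 - a ^ 2) := funext hrp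
      rw [this]
      continuity
    apply Continuous.continuousOn
    apply Continuous.mul continuous_const
    apply Continuous.sub hrp_cont
    apply Continuous.div (by continuity) (by continuity)
    intro x
    exact pow_ne_zero 3 (hrpos x).ne'
  · intro a ha b hb hab
    simp only [key]
    have hlt : rp b < rp a := hrp_anti a ha b hb hab
    have hb4 : a ^ 4 < b ^ 4 := by
      exact pow_lt_pow_left₀ hab ha.1 (by norm_num)
    have hdiv : a ^ 4 / (rp a) ^ 3 < b ^ 4 / (rp b) ^ 3 := by
      have hp3 : (0:ℝ) < (rp b) ^ 3 := pow_pos (hrpos b) 3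
      have h1 : a ^ 4 / (rp a) ^ 3 ≤ a ^ 4 / (rp b) ^ 3 := by
        apply div_le_div_of_nonneg_left (by positivity) hp3
        exact pow_le_pow_left₀ (hrpos b).le hlt.le 3
      have h2 : a ^ 4 / (rp b) ^ 3 < b ^ 4 / (rp b) ^ 3 :=
        (div_lt_div_iff_of_pos_right hp3).mpr hb4
      linarith
    have hc : (0:ℝ) < B / (4 * M) := by positivity
    apply mul_lt_mul_of_pos_left _ hc
    linarith
  · rw [key M, hrpM]
    have h4 : M - M ^ 4 / M ^ 3 = 0 := by
      field_simp
      ring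
    rw [h4, mul_zero]
end

section
/- Let M > 0 and B > 0, and for a ∈ [0, M] set r₊(a) = M + √(M² − a²), Ω_H(a) = a/(2 M r₊(a)), Φ(a) = π r₊(a)² B (1 − a⁴/r₊(a)⁴), and the Blandford–Znajek jet power P(a) = (1/8π) Ω_H(a)² Φ(a)². Then P(a) = (π/2) a² B² (M² − a²)/r₊(a)²; in particular P(0) = 0, P(a) > 0 for 0 < a < M, P(M) = 0, and P(a) → 0 as a → M from below: a spin-powered jet threaded by the Wald field is quenched in the extremal limit. -/
open Real Set Filter

lemma bz_aux (M B s t : ℝ) (hM : 0 < M) (hrpos : 0 < M + s)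
    (hs2 : s ^ 2 = M ^ 2 - t) :
    1 / (8 * π) * (t / (2 * M * (M + s)) ^ 2) *
      (π * (M + s) ^ 2 * B * (1 - t ^ 2 / (M + s) ^ 4)) ^ 2 =
    π / 2 * t * B ^ 2 * (M ^ 2 - t) / (M + s) ^ 2 := by
  have ht : t = M ^ 2 - s ^ 2 := by linarith
  subst ht
  have hpi : (0:ℝ) < π := Real.pi_pos
  field_simp
  ring

/-- The Blandford–Znajek jet power `P(a) = (1/8π) Ω_H(a)² Φ(a)²` for the Wald flux
satisfies `P(a) = (π/2) a² B² (M² − a²)/r₊(a)²` on `[0, M]`; in particular `P(0) = 0`,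
`P(a) > 0` for `0 < a < M`, `P(M) = 0`, and `P(a) → 0` as `a → M⁻`: a spin-powered jet
threaded by the Wald field is quenched in the extremal limit. -/
theorem bz_jet_power_quenched (M B : ℝ) (hM : 0 < M) (hB : 0 < B)
    (rp ΩH Φ P : ℝ → ℝ)
    (hrp : ∀ a, rp a = M + Real.sqrt (M ^ 2 - a ^ 2))
    (hΩH : ∀ a, ΩH a = a / (2 * M * rp a))
    (hΦ : ∀ a, Φ a = π * (rp a) ^ 2 * B * (1 - a ^ 4 / (rp a) ^ 4))
    (hP : ∀ a, P a = 1 / (8 * π) * (ΩH a) ^ 2 * (Φ a) ^ 2) :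
    (∀ a ∈ Set.Icc (0:ℝ) M,
        P a = π / 2 * a ^ 2 * B ^ 2 * (M ^ 2 - a ^ 2) / (rp a) ^ 2) ∧
    P 0 = 0 ∧
    (∀ a : ℝ, 0 < a → a < M → 0 < P a) ∧
    P M = 0 ∧
    Filter.Tendsto P (nhdsWithin M (Set.Iio M)) (nhds 0) := by
  have hmain : ∀ a ∈ Set.Icc (0:ℝ) M,
      P a = π / 2 * a ^ 2 * B ^ 2 * (M ^ 2 - a ^ 2) / (rp a) ^ 2 := by
    rintro a ⟨h0, h1⟩
    have hs2 : Real.sqrt (M ^ 2 - a ^ 2) ^ 2 = M ^ 2 - a ^ 2 :=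
      Real.sq_sqrt (by nlinarith)
    have hsnn : (0:ℝ) ≤ Real.sqrt (M ^ 2 - a ^ 2) := Real.sqrt_nonneg _
    have hrpos : 0 < M + Real.sqrt (M ^ 2 - a ^ 2) := by linarith
    rw [hP, hΩH, hΦ, hrp a, div_pow, show a ^ 4 = (a ^ 2) ^ 2 by ring]
    exact bz_aux M B _ (a ^ 2) hM hrpos hs2
  have hrpos : ∀ a, 0 ≤ a → a ≤ M → 0 < rp a := by
    intro a h0 h1
    rw [hrp a]
    have := Real.sqrt_nonneg (M ^ 2 - a ^ 2)
    linarith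
  refine ⟨hmain, ?_, ?_, ?_, ?_⟩
  · have := hmain 0 ⟨le_refl _, hM.le⟩
    simpa using this
  · intro a h0 h1
    rw [hmain a ⟨h0.le, h1.le⟩]
    have hr := hrpos a h0.le h1.le
    have hpi : (0:ℝ) < π := Real.pi_pos
    apply div_pos
    · have : 0 < M ^ 2 - a ^ 2 := by nlinarith
      positivity
    · positivity
  · have := hmain M ⟨hM.le, le_refl _⟩
    simpa using this
  · have hgM : π / 2 * M ^ 2 * B ^ 2 * (M ^ 2 - M ^ 2) /
        (M + Real.sqrt (M ^ 2 - M ^ 2)) ^ 2 = 0 := by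
      simp
    have hc : ContinuousAt (fun a : ℝ =>
        π / 2 * a ^ 2 * B ^ 2 * (M ^ 2 - a ^ 2) /
          (M + Real.sqrt (M ^ 2 - a ^ 2)) ^ 2) M := by
      apply ContinuousAt.div
      · fun_prop
      · fun_prop
      · rw [show M ^ 2 - M ^ 2 = (0:ℝ) by ring, Real.sqrt_zero, add_zero]
        exact pow_ne_zero _ (ne_of_gt hM)
    have htend : Filter.Tendsto (fun a : ℝ =>
        π / 2 * a ^ 2 * B ^ 2 * (M ^ 2 - a ^ 2) /
          (M + Real.sqrt (M ^ 2 - a ^ 2)) ^ 2)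
        (nhdsWithin M (Set.Iio M)) (nhds 0) := by
      have := hc.tendsto.mono_left (nhdsWithin_le_nhds (s := Set.Iio M))
      rwa [hgM] at this
    refine htend.congr' ?_
    filter_upwards [Ioo_mem_nhdsLT_of_mem (⟨hM, le_refl M⟩ : M ∈ Set.Ioc 0 M)]
      with a ha
    rw [hmain a ⟨ha.1.le, ha.2.le⟩, hrp a]
end
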